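/- arXiv:1704.02212 — 3 statements merged into one kernel-verified Lean document; each statement's English description precedes it below -/
import Mathlib

section
/- Let Λ be a commutative Noetherian ring, 𝔞 and 𝔟 two ideals of Λ, and M a finitely generated Λ-module. Then the 𝔟-adic completion of the 𝔞-adic completion of M is naturally isomorphic to the (𝔞+𝔟)-adic completion of M: (M̂_𝔞)^∧_𝔟 ≅ M̂_{𝔞+𝔟} ≅ (M̂_𝔟)^∧_𝔞. -/
/-!
Send `x ∈ (M̂_𝔞)^_𝔟` to the compatible family whose `n`-th term is the image in
`M ⧸ (𝔞 + 𝔟)^n M` of any lift `y ∈ M̂_𝔞` of `xₙ ∈ M̂_𝔞 ⧸ 𝔟^n M̂_𝔞`; this is well defined since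
`𝔞^n M + 𝔟^n M ⊆ (𝔞 + 𝔟)^n M`. Because `(𝔞 + 𝔟)^(k+n) M ⊆ 𝔞^k M + 𝔟^n M`, both injectivity and
surjectivity come down to identifying `M̂_𝔞 ⧸ 𝔟^n M̂_𝔞` with the `𝔞`-adic completion of
`M ⧸ 𝔟^n M`, i.e. to showing that the kernel of `M̂_𝔞 → (M ⧸ 𝔟^n M)^_𝔞` is `𝔟^n M̂_𝔞`. This is
where Noetherianity enters: completion is exact on finitely generated modules (Artin–Rees), so
the kernel is the image of the completion of the finitely generated module `𝔟^n M`, and that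
image is generated over `Λ̂_𝔞` by `𝔟^n M`.
The second isomorphism is the first one with `𝔞` and `𝔟` exchanged.
-/

open Submodule

universe u

section

variable {R : Type*} [CommRing R] {M : Type*} [AddCommGroup M] [Module R M]

theorem Submodule.Quotient.mk_mem_smul_top_iff (p : Submodule R M) (J : Ideal R) (x : M) :
    (Submodule.Quotient.mk x : M ⧸ p) ∈ (J • ⊤ : Submodule R (M ⧸ p)) ↔ x ∈ p ⊔ J • ⊤ := by
  rw [← comap_map_mkQ, map_smul'', map_top, range_mkQ]
  rfl

theorem Submodule.Quotient.mk_mk_eq_zero_iff (I J : Ideal R) (x : M) :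
    (Submodule.Quotient.mk (Submodule.Quotient.mk x : M ⧸ (J • ⊤ : Submodule R M)) :
      (M ⧸ (J • ⊤ : Submodule R M)) ⧸ (I • ⊤ : Submodule R (M ⧸ (J • ⊤ : Submodule R M)))) = 0 ↔
      x ∈ (I • ⊤ : Submodule R M) ⊔ J • ⊤ := by
  rw [Submodule.Quotient.mk_eq_zero, Submodule.Quotient.mk_mem_smul_top_iff, sup_comm]

theorem Submodule.map_smul_top_le {N : Type*} [AddCommGroup N] [Module R N] (f : M →ₗ[R] N)
    (J : Ideal R) : (J • ⊤ : Submodule R M).map f ≤ J • ⊤ := by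
  rw [map_smul'']
  exact smul_mono_right _ le_top

theorem Submodule.pow_smul_top_sup_pow_smul_top_le (I J : Ideal R) (n : ℕ) :
    (I ^ n • ⊤ ⊔ J ^ n • ⊤ : Submodule R M) ≤ (I ⊔ J) ^ n • ⊤ := by
  rw [← sup_smul]
  exact smul_mono_left (sup_le (Ideal.pow_right_mono le_sup_left n)
    (Ideal.pow_right_mono le_sup_right n))

theorem Submodule.sup_pow_add_smul_top_le (I J : Ideal R) (k n : ℕ) :
    ((I ⊔ J) ^ (k + n) • ⊤ : Submodule R M) ≤ I ^ k • ⊤ ⊔ J ^ n • ⊤ := by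
  rw [← sup_smul]
  exact smul_mono_left Ideal.sup_pow_add_le_pow_sup_pow

theorem Module.IsTorsionBySet.adicCompletion (I : Ideal R) {J : Ideal R}
    (h : Module.IsTorsionBySet R M J) : Module.IsTorsionBySet R (AdicCompletion I M) J := by
  intro w r
  ext n
  obtain ⟨t, ht⟩ := Submodule.Quotient.mk_surjective _ (w.val n)
  rw [AdicCompletion.val_smul_apply, AdicCompletion.val_zero_apply, ← ht,
    ← Submodule.Quotient.mk_smul, h, Submodule.Quotient.mk_zero]

theorem AdicCompletion.map_subtype_mem_smul_top (I J : Ideal R) [Module.Finite R (J • ⊤ : Submodule R M)]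
    (w : AdicCompletion I (J • ⊤ : Submodule R M)) :
    map I (J • ⊤ : Submodule R M).subtype w ∈ (J • ⊤ : Submodule R (AdicCompletion I M)) := by
  obtain ⟨t, rfl⟩ := ofTensorProduct_surjective_of_finite I (J • ⊤ : Submodule R M) w
  induction t using TensorProduct.induction_on with
  | zero => simp
  | tmul r x =>
    rw [ofTensorProduct_tmul, map_smul, map_of]
    exact map_smul_top_le ((LinearMap.lsmul (AdicCompletion I R) _ r).restrictScalars R) J
      ⟨_, map_smul_top_le (of I M) J ⟨x, x.2, rfl⟩, rfl⟩
  | add t t' ht ht' => rw [map_add, map_add]; exact add_mem ht ht'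

end

namespace AdicCompletion

section

variable {Λ : Type*} [CommRing Λ] (𝔞 𝔟 : Ideal Λ) (M : Type*) [AddCommGroup M] [Module Λ M]

noncomputable def evalSup (n : ℕ) :
    AdicCompletion 𝔞 M →ₗ[Λ] M ⧸ ((𝔞 ⊔ 𝔟) ^ n • ⊤ : Submodule Λ M) :=
  factor (le_sup_left.trans (pow_smul_top_sup_pow_smul_top_le 𝔞 𝔟 n)) ∘ₗ eval 𝔞 M n

theorem smul_top_le_ker_evalSup (n : ℕ) :
    (𝔟 ^ n • ⊤ : Submodule Λ (AdicCompletion 𝔞 M)) ≤ LinearMap.ker (evalSup 𝔞 𝔟 M n) := by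
  refine smul_le.mpr fun r hr y _ => ?_
  rw [LinearMap.mem_ker, map_smul]
  exact Module.isTorsionBySet_quotient_ideal_smul M _
    (a := ⟨r, Ideal.pow_right_mono le_sup_right n hr⟩)

variable {𝔞 𝔟 M} in
theorem evalSup_apply {n : ℕ} {y : AdicCompletion 𝔞 M} {t : M}
    (ht : y.val n = Submodule.Quotient.mk t) : evalSup 𝔞 𝔟 M n y = Submodule.Quotient.mk t := by
  simp [evalSup, ht]

noncomputable def iteratedToSup :
    AdicCompletion 𝔟 (AdicCompletion 𝔞 M) →ₗ[Λ] AdicCompletion (𝔞 ⊔ 𝔟) M :=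
  lift (𝔞 ⊔ 𝔟) (fun n => liftQ _ (evalSup 𝔞 𝔟 M n) (smul_top_le_ker_evalSup 𝔞 𝔟 M n) ∘ₗ
    eval 𝔟 (AdicCompletion 𝔞 M) n) fun {m n} hmn => by
      refine LinearMap.ext fun x => ?_
      obtain ⟨y, hy⟩ := Submodule.Quotient.mk_surjective _ (x.val n)
      obtain ⟨t, ht⟩ := Submodule.Quotient.mk_surjective _ (y.val n)
      have hxm : x.val m = Submodule.Quotient.mk y := by rw [← x.property hmn, ← hy]; rfl
      have hym : y.val m = Submodule.Quotient.mk t := by rw [← y.property hmn, ← ht]; rfl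
      simp [← hy, hxm, evalSup_apply ht.symm, evalSup_apply hym]

noncomputable def quotSupPowToQuotQuot (k n : ℕ) :
    M ⧸ ((𝔞 ⊔ 𝔟) ^ (k + n) • ⊤ : Submodule Λ M) →ₗ[Λ]
      (M ⧸ (𝔟 ^ n • ⊤ : Submodule Λ M)) ⧸
        (𝔞 ^ k • ⊤ : Submodule Λ (M ⧸ (𝔟 ^ n • ⊤ : Submodule Λ M))) :=
  liftQ _ (mkQ _ ∘ₗ mkQ _) fun t ht =>
    (Submodule.Quotient.mk_mk_eq_zero_iff _ _ t).mpr (sup_pow_add_smul_top_le 𝔞 𝔟 k n ht)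

noncomputable def supToQuotPow (n : ℕ) :
    AdicCompletion (𝔞 ⊔ 𝔟) M →ₗ[Λ] AdicCompletion 𝔞 (M ⧸ (𝔟 ^ n • ⊤ : Submodule Λ M)) :=
  lift 𝔞 (fun k => quotSupPowToQuotQuot 𝔞 𝔟 M k n ∘ₗ eval (𝔞 ⊔ 𝔟) M (k + n))
    fun {k k'} hkk' => by
      refine LinearMap.ext fun z => ?_
      obtain ⟨t, ht⟩ := Submodule.Quotient.mk_surjective _ (z.val (k' + n))
      have hzk : z.val (k + n) = Submodule.Quotient.mk t := by
        rw [← z.property (Nat.add_le_add_right hkk' n), ← ht]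
        rfl
      simp only [LinearMap.comp_apply, eval_apply, ← ht, hzk]
      rfl

variable {𝔞 𝔟 M}

theorem iteratedToSup_apply {x : AdicCompletion 𝔟 (AdicCompletion 𝔞 M)} {n : ℕ}
    {y : AdicCompletion 𝔞 M} (hy : x.val n = Submodule.Quotient.mk y) {t : M}
    (ht : y.val n = Submodule.Quotient.mk t) :
    (iteratedToSup 𝔞 𝔟 M x).val n = Submodule.Quotient.mk t := by
  change liftQ _ (evalSup 𝔞 𝔟 M n) (smul_top_le_ker_evalSup 𝔞 𝔟 M n) (x.val n) = _
  rw [hy, liftQ_apply, evalSup_apply ht]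

theorem supToQuotPow_apply {z : AdicCompletion (𝔞 ⊔ 𝔟) M} {n k : ℕ} {t : M}
    (ht : z.val (k + n) = Submodule.Quotient.mk t) :
    (supToQuotPow 𝔞 𝔟 M n z).val k = Submodule.Quotient.mk (Submodule.Quotient.mk t) := by
  change quotSupPowToQuotQuot 𝔞 𝔟 M k n (z.val (k + n)) = _
  rw [ht]
  rfl

theorem map_factor_supToQuotPow {m n : ℕ} (h : m ≤ n) (z : AdicCompletion (𝔞 ⊔ 𝔟) M) :
    map 𝔞 (factor (smul_mono_left (Ideal.pow_le_pow_right h) :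
      (𝔟 ^ n • ⊤ : Submodule Λ M) ≤ 𝔟 ^ m • ⊤)) (supToQuotPow 𝔞 𝔟 M n z) =
      supToQuotPow 𝔞 𝔟 M m z := by
  ext k
  obtain ⟨t, ht⟩ := Submodule.Quotient.mk_surjective _ (z.val (k + n))
  have hzm : z.val (k + m) = Submodule.Quotient.mk t := by
    rw [← z.property (Nat.add_le_add_left h k), ← ht]
    rfl
  rw [map_val_apply, supToQuotPow_apply ht.symm, supToQuotPow_apply hzm]
  rfl

end

variable {Λ : Type u} [CommRing Λ] {𝔞 𝔟 : Ideal Λ} {M : Type u} [AddCommGroup M] [Module Λ M]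
  [IsNoetherianRing Λ] [Module.Finite Λ M]

variable (𝔞) in
theorem map_mkQ_eq_zero_iff (J : Ideal Λ) (z : AdicCompletion 𝔞 M) :
    map 𝔞 (J • ⊤ : Submodule Λ M).mkQ z = 0 ↔ z ∈ (J • ⊤ : Submodule Λ (AdicCompletion 𝔞 M)) := by
  constructor
  · intro hz
    obtain ⟨w, rfl⟩ := (map_exact (I := 𝔞) (injective_subtype _) (LinearMap.exact_subtype_mkQ _)
      (mkQ_surjective _) z).mp hz
    exact map_subtype_mem_smul_top 𝔞 J w
  · intro hz
    refine smul_induction_on hz (fun r hr y _ => ?_) (fun y y' hy hy' => ?_)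
    · rw [LinearMap.map_smul_of_tower]
      exact (Module.isTorsionBySet_quotient_ideal_smul M J).adicCompletion 𝔞 (a := ⟨r, hr⟩)
    · rw [map_add, hy, hy', add_zero]

theorem iteratedToSup_injective : Function.Injective (iteratedToSup 𝔞 𝔟 M) := by
  refine (injective_iff_map_eq_zero _).mpr fun x hx => ?_
  ext n
  obtain ⟨y, hy⟩ := Submodule.Quotient.mk_surjective _ (x.val n)
  rw [val_zero_apply, ← hy, Submodule.Quotient.mk_eq_zero, ← map_mkQ_eq_zero_iff]
  ext k
  obtain ⟨Y, hY⟩ := Submodule.Quotient.mk_surjective _ (x.val (k + n))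
  obtain ⟨t, ht⟩ := Submodule.Quotient.mk_surjective _ (Y.val (k + n))
  have hyY : y - Y ∈ (𝔟 ^ n • ⊤ : Submodule Λ (AdicCompletion 𝔞 M)) := by
    rw [← Submodule.Quotient.eq, hy, ← x.property (Nat.le_add_left n k), ← hY]
    rfl
  have hYk : Y.val k = Submodule.Quotient.mk t := by
    rw [← Y.property (Nat.le_add_right k n), ← ht]
    rfl
  have ht0 : t ∈ ((𝔞 ⊔ 𝔟) ^ (k + n) • ⊤ : Submodule Λ M) := by
    rw [← Submodule.Quotient.mk_eq_zero, ← iteratedToSup_apply hY.symm ht.symm, hx]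
    rfl
  rw [← sub_add_cancel y Y, map_add, (map_mkQ_eq_zero_iff 𝔞 _ _).mpr hyY, zero_add,
    map_val_apply, hYk, LinearMap.reduceModIdeal_apply, val_zero_apply, mkQ_apply,
    Submodule.Quotient.mk_mk_eq_zero_iff]
  exact sup_pow_add_smul_top_le 𝔞 𝔟 k n ht0

theorem iteratedToSup_surjective : Function.Surjective (iteratedToSup 𝔞 𝔟 M) := by
  intro z
  choose y hy using fun n => map_surjective 𝔞 (mkQ_surjective (𝔟 ^ n • ⊤ : Submodule Λ M))
    (supToQuotPow 𝔞 𝔟 M n z)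
  have hcompat {m n : ℕ} (h : m ≤ n) :
      y n - y m ∈ (𝔟 ^ m • ⊤ : Submodule Λ (AdicCompletion 𝔞 M)) := by
    rw [← map_mkQ_eq_zero_iff, map_sub, sub_eq_zero, hy m, ← map_factor_supToQuotPow h, ← hy n,
      map_comp_apply, factor_comp_mk]
  let x : AdicCompletion 𝔟 (AdicCompletion 𝔞 M) :=
    ⟨fun n => Submodule.Quotient.mk (y n), fun h => (Submodule.Quotient.eq _).mpr (hcompat h)⟩
  refine ⟨x, ext fun n => ?_⟩
  obtain ⟨t, ht⟩ := Submodule.Quotient.mk_surjective _ ((y n).val n)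
  obtain ⟨s, hs⟩ := Submodule.Quotient.mk_surjective _ (z.val (n + n))
  have hzn : z.val n = Submodule.Quotient.mk s := by
    rw [← z.property (Nat.le_add_left n n), ← hs]
    rfl
  have hts := congrArg (fun w => w.val n) (hy n)
  simp only [map_val_apply, ← ht, LinearMap.reduceModIdeal_apply, supToQuotPow_apply hs.symm] at hts
  rw [mkQ_apply, ← sub_eq_zero, ← Submodule.Quotient.mk_sub, ← Submodule.Quotient.mk_sub,
    Submodule.Quotient.mk_mk_eq_zero_iff] at hts
  rw [iteratedToSup_apply (rfl : x.val n = _) ht.symm, hzn, Submodule.Quotient.eq]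
  exact pow_smul_top_sup_pow_smul_top_le 𝔞 𝔟 n hts

variable (𝔞 𝔟 M) in
noncomputable def iteratedEquivSup :
    AdicCompletion 𝔟 (AdicCompletion 𝔞 M) ≃ₗ[Λ] AdicCompletion (𝔞 ⊔ 𝔟) M :=
  LinearEquiv.ofBijective (iteratedToSup 𝔞 𝔟 M) ⟨iteratedToSup_injective, iteratedToSup_surjective⟩

end AdicCompletion

/-- For a commutative Noetherian ring `Λ`, ideals `𝔞 𝔟`, and a finitely
generated `Λ`-module `M`, the `𝔟`-adic completion of the `𝔞`-adic completion of `M` is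
isomorphic to the `(𝔞+𝔟)`-adic completion, which is isomorphic to the `𝔞`-adic completion
of the `𝔟`-adic completion. -/
theorem bousfield_stmt10 (Λ : Type) [CommRing Λ] [IsNoetherianRing Λ]
    (𝔞 𝔟 : Ideal Λ) (M : Type) [AddCommGroup M] [Module Λ M] [Module.Finite Λ M] :
    Nonempty (AdicCompletion 𝔟 (AdicCompletion 𝔞 M) ≃ₗ[Λ] AdicCompletion (𝔞 ⊔ 𝔟) M) ∧
    Nonempty (AdicCompletion (𝔞 ⊔ 𝔟) M ≃ₗ[Λ] AdicCompletion 𝔞 (AdicCompletion 𝔟 M)) :=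
  ⟨⟨AdicCompletion.iteratedEquivSup 𝔞 𝔟 M⟩,
    sup_comm 𝔟 𝔞 ▸ ⟨(AdicCompletion.iteratedEquivSup 𝔟 𝔞 M).symm⟩⟩
end

section
/- Let K be an Artinian commutative ring, C an infinite cyclic group, and M a K[C]-module that is finitely generated as a K-module. Let I be the augmentation ideal of K[C]. Then C acts nilpotently on the I-adic completion M̂_I, the natural map M → M̂_I is a split surjection of C-modules, and there is a natural direct sum decomposition M = MI^∞ ⊕ M̂_I where MI^∞ = ∩_{i≥1} MI^i. -/
/-!
Over `K[C]` the module `M` is both Artinian and Noetherian, and `I` is principal, generated by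
`t - 1`. Artinianity makes the chain `MI^i` stationary from some `n` on; then `M → M̂_I` is onto
with kernel `MI^n = MI^∞`, so `M̂_I` is killed by `I^n`. Fitting's lemma for multiplication by
`t - 1` provides a `K[C]`-stable complement of `MI^n`, and a surjection whose kernel has a
complement splits.
-/

open MonoidAlgebra

/-- The infinite cyclic group. -/
abbrev C : Type := Multiplicative ℤ

/-- The augmentation ideal `I = Ker(K[C] → K)` of the group ring of the infinite
cyclic group. -/
noncomputable def augIdeal (K : Type) [CommRing K] : Ideal (MonoidAlgebra K C) :=
  RingHom.ker ((MonoidAlgebra.lift K K C) 1).toRingHom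

theorem augIdeal_eq_span_singleton (K : Type) [CommRing K] :
    augIdeal K = Ideal.span {of K C (Multiplicative.ofAdd 1) - 1} := by
  set J := Ideal.span {of K C (Multiplicative.ofAdd 1) - 1}
  refine le_antisymm (fun f hf => ?_) ?_
  · -- both sides are `K`-algebra maps `K[C] → K[C] ⧸ J` sending the generator `t` to `1`
    have hquot : Ideal.Quotient.mkₐ K J = (Algebra.ofId K _).comp (lift K K C 1) := by
      refine MonoidAlgebra.algHom_ext (fun g => ?_) (Subsingleton.elim _ _)
      have hgen : (Ideal.Quotient.mk J).toMonoidHom.comp (of K C) = 1 :=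
        MonoidHom.ext_mint (Ideal.Quotient.eq.mpr (Ideal.mem_span_singleton_self _))
      simpa using DFunLike.congr_fun hgen g
    have hf0 : lift K K C 1 f = 0 := hf
    simpa [hf0, Ideal.Quotient.eq_zero_iff_mem] using congr($hquot f)
  · rw [Ideal.span_le, Set.singleton_subset_iff]
    simp [augIdeal]

instance augIdeal_isPrincipal (K : Type) [CommRing K] : (augIdeal K).IsPrincipal :=
  ⟨_, augIdeal_eq_span_singleton K⟩

section

variable {R M : Type*} [CommRing R] [AddCommGroup M] [Module R M]

theorem span_singleton_pow_smul_top (a : R) (n : ℕ) :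
    Ideal.span {a} ^ n • (⊤ : Submodule R M) =
      LinearMap.range (Module.toModuleEnd R (S := R) M a ^ n) := by
  rw [Ideal.span_singleton_pow, Submodule.ideal_span_singleton_smul, ← map_pow,
    ← Submodule.map_top]
  rfl

theorem exists_isCompl_iInf_pow_smul_top [IsArtinian R M] [IsNoetherian R M] (I : Ideal R)
    [I.IsPrincipal] : ∃ N : Submodule R M, IsCompl N (⨅ n : ℕ, I ^ n • ⊤) := by
  obtain ⟨a, rfl⟩ := Submodule.IsPrincipal.principal I
  set φ := Module.toModuleEnd R (S := R) M a
  simp_rw [Ideal.submodule_span_eq, span_singleton_pow_smul_top]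
  obtain ⟨n, hcompl, hinf⟩ :=
    (φ.eventually_isCompl_ker_pow_range_pow.and φ.eventually_iInf_range_pow_eq).exists
  exact ⟨_, hinf ▸ hcompl⟩

theorem IsArtinian.exists_pow_smul_top_stable [IsArtinian R M] (I : Ideal R) :
    ∃ n, ∀ m ≥ n, I ^ m • (⊤ : Submodule R M) = I ^ n • ⊤ := by
  obtain ⟨n, hn⟩ := IsArtinian.monotone_stabilizes
    ⟨fun m => OrderDual.toDual (I ^ m • (⊤ : Submodule R M)),
      fun _ _ h => Submodule.pow_smul_top_le I M h⟩
  exact ⟨n, fun m hm => (hn m hm).symm⟩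

theorem LinearMap.exists_rightInverse_and_equiv_prod_of_isCompl_ker {P : Type*}
    [AddCommGroup P] [Module R P] {f : M →ₗ[R] P} (hf : Function.Surjective f)
    {N : Submodule R M} (hN : IsCompl N (LinearMap.ker f)) :
    (∃ s : P →ₗ[R] M, f ∘ₗ s = LinearMap.id) ∧ Nonempty (M ≃ₗ[R] LinearMap.ker f × P) := by
  let E := LinearMap.equivProdOfSurjectiveOfIsCompl (Submodule.projectionOnto _ N hN.symm) f
    (Submodule.range_projectionOnto _) (LinearMap.range_eq_top.mpr hf)
    (by rwa [Submodule.ker_projectionOnto])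
  refine ⟨⟨E.symm.toLinearMap ∘ₗ LinearMap.inr R _ _, ?_⟩, ⟨E⟩⟩
  ext p
  exact congr_arg Prod.snd (E.apply_symm_apply (0, p))

namespace AdicCompletion

theorem ker_of (I : Ideal R) :
    LinearMap.ker (of I M) = ⨅ n : ℕ, I ^ n • (⊤ : Submodule R M) := by
  ext x
  simp [AdicCompletion.ext_iff, Submodule.Quotient.mk_eq_zero]

variable {I : Ideal R} {n : ℕ}

theorem isPrecomplete_of_pow_smul_top_stable
    (hn : ∀ m ≥ n, I ^ m • (⊤ : Submodule R M) = I ^ n • ⊤) : IsPrecomplete I M := by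
  refine ⟨fun f hf => ⟨f n, fun m => ?_⟩⟩
  rcases le_total m n with h | h
  · exact hf h
  · rw [hn m h]
    exact (hf h).symm

theorem pow_smul_top_eq_bot_of_stable
    (hn : ∀ m ≥ n, I ^ m • (⊤ : Submodule R M) = I ^ n • ⊤) :
    I ^ n • (⊤ : Submodule R (AdicCompletion I M)) = ⊥ := by
  have : IsPrecomplete I M := isPrecomplete_of_pow_smul_top_stable hn
  rw [← LinearMap.range_eq_top.mpr (of_surjective I M), LinearMap.range_eq_map,
    ← Submodule.map_smul'', ← LinearMap.le_ker_iff_map, ker_of]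
  refine le_iInf fun m => ?_
  rcases le_total m n with h | h
  · exact Submodule.pow_smul_top_le I M h
  · exact (hn m h).ge

end AdicCompletion

end

/-- Let `K` be an Artinian commutative ring and `M` a `K[C]`-module that is
finitely generated over `K`.  Then (a) `C` acts nilpotently on the `I`-adic completion
`M̂_I` (i.e. `M̂_I · I^n = 0` for some `n`), (b) the natural map `M → M̂_I` is a split
surjection of `C`-modules (i.e. of `K[C]`-modules), and (c) `M ≅ MI^∞ ⊕ M̂_I`, where
`MI^∞ = ⋂ᵢ MI^i`. -/
theorem bousfield_stmt12 (K : Type) [CommRing K] [IsArtinianRing K]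
    (M : Type) [AddCommGroup M] [Module (MonoidAlgebra K C) M]
    [Module K M] [IsScalarTower K (MonoidAlgebra K C) M] [Module.Finite K M] :
    (∃ n : ℕ, (augIdeal K) ^ n •
        (⊤ : Submodule (MonoidAlgebra K C) (AdicCompletion (augIdeal K) M)) = ⊥) ∧
    (∃ s : AdicCompletion (augIdeal K) M →ₗ[MonoidAlgebra K C] M,
        (AdicCompletion.of (augIdeal K) M) ∘ₗ s = LinearMap.id) ∧
    Nonempty (M ≃ₗ[MonoidAlgebra K C]
        (↥(⨅ i : ℕ, (augIdeal K) ^ i • (⊤ : Submodule (MonoidAlgebra K C) M)) ×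
          AdicCompletion (augIdeal K) M)) := by
  have : IsArtinian (MonoidAlgebra K C) M := isArtinian_of_tower K inferInstance
  have : IsNoetherian (MonoidAlgebra K C) M := isNoetherian_of_tower K inferInstance
  obtain ⟨n, hn⟩ := IsArtinian.exists_pow_smul_top_stable (augIdeal K) (M := M)
  obtain ⟨N, hN⟩ := exists_isCompl_iInf_pow_smul_top (augIdeal K) (M := M)
  have : IsPrecomplete (augIdeal K) M := AdicCompletion.isPrecomplete_of_pow_smul_top_stable hn
  rw [← AdicCompletion.ker_of] at hN ⊢
  exact ⟨⟨n, AdicCompletion.pow_smul_top_eq_bot_of_stable hn⟩,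
    LinearMap.exists_rightInverse_and_equiv_prod_of_isCompl_ker
      (AdicCompletion.of_surjective _ M) hN⟩
end

section
/- Let A be an abelian group such that A/pA and the p-torsion subgroup {a ∈ A | pa = 0} are both finite. Then the ℤ/p-completion Â_{ℤ/p} = lim A/p^i A is a finitely generated ℤ_p-module. -/
/-- The subgroup `pA = {x | ∃ a, p • a = x}` of an abelian group `A`. -/
def pMul (p : ℕ) (A : Type) [AddCommGroup A] : AddSubgroup A where
  carrier := {x | ∃ a : A, p • a = x}
  zero_mem' := ⟨0, smul_zero p⟩
  add_mem' := by rintro _ _ ⟨a, rfl⟩ ⟨b, rfl⟩; exact ⟨a + b, smul_add p a b⟩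
  neg_mem' := by rintro _ ⟨a, rfl⟩; exact ⟨-a, smul_neg p a⟩

/-- The `p`-torsion subgroup `{a ∈ A | p • a = 0}`. -/
def pTor (p : ℕ) (A : Type) [AddCommGroup A] : AddSubgroup A where
  carrier := {x | p • x = 0}
  zero_mem' := smul_zero p
  add_mem' := by
    intro a b ha hb
    show p • (a + b) = 0
    rw [smul_add, ha, hb, add_zero]
  neg_mem' := by
    intro a ha
    show p • (-a) = 0
    rw [smul_neg, ha, neg_zero]

/-!
If `M / I M` is finitely generated over `R`, lift a surjection `Rⁿ → M / I M` to a map `Rⁿ → M`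
(possible since `Rⁿ` is projective). Such a map is surjective modulo `I`, so it induces a
surjection on `I`-adic completions, and the completion of `Rⁿ` is `R̂ⁿ`. For `R = ℤ`, `I = (p)`,
the module `A / pA` is finite, hence finitely generated.
-/

namespace AdicCompletion

theorem finite_of_finite_quotient {R M : Type*} [CommRing R] [AddCommGroup M] [Module R M]
    (I : Ideal R) [Module.Finite R (M ⧸ (I • ⊤ : Submodule R M))] :
    Module.Finite (AdicCompletion I R) (AdicCompletion I M) := by
  obtain ⟨n, g, hg⟩ := Module.Finite.exists_fin' R (M ⧸ (I • ⊤ : Submodule R M))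
  obtain ⟨f, hf⟩ := Module.projective_lifting_property (I • ⊤ : Submodule R M).mkQ g
    (Submodule.mkQ_surjective _)
  have : Module.Finite (AdicCompletion I R) (AdicCompletion I (Fin n → R)) :=
    Module.Finite.equiv (piEquivFin I n).symm
  exact Module.Finite.of_surjective (map I f) (map_surjective_of_mkQ_comp_surjective (hf ▸ hg))

end AdicCompletion

theorem toAddSubgroup_span_smul_top_eq_pMul (p : ℕ) (A : Type) [AddCommGroup A] :
    (Ideal.span {(p : ℤ)} • ⊤ : Submodule ℤ A).toAddSubgroup = pMul p A := by
  ext x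
  simp only [Submodule.mem_toAddSubgroup, Submodule.ideal_span_singleton_smul,
    Submodule.mem_smul_pointwise_iff_exists, Submodule.mem_top, true_and, natCast_zsmul]
  rfl

theorem bousfield_stmt16_general (p : ℕ) (A : Type) [AddCommGroup A]
    (h1 : Finite (A ⧸ pMul p A)) :
    Module.Finite (AdicCompletion (Ideal.span {(p : ℤ)}) ℤ)
      (AdicCompletion (Ideal.span {(p : ℤ)}) A) := by
  have : Finite (A ⧸ (Ideal.span {(p : ℤ)} • ⊤ : Submodule ℤ A)) :=
    Finite.of_equiv _ (QuotientAddGroup.quotientAddEquivOfEq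
      (toAddSubgroup_span_smul_top_eq_pMul p A).symm).toEquiv
  have : Module.Finite ℤ (A ⧸ (Ideal.span {(p : ℤ)} • ⊤ : Submodule ℤ A)) :=
    Module.Finite.of_finite
  exact AdicCompletion.finite_of_finite_quotient _

/-- if `A/pA` and the `p`-torsion of `A` are finite, then the `ℤ/p`-completion
`Â = lim A/p^i A` (the `(p)`-adic completion of `A` as a `ℤ`-module) is a finitely generated
module over the ring of `p`-adic integers (realized as the `(p)`-adic completion of `ℤ`). -/
theorem bousfield_stmt16 (p : ℕ) (hp : p.Prime) (A : Type) [AddCommGroup A]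
    (h1 : Finite (A ⧸ pMul p A)) (h2 : Finite (pTor p A)) :
    Module.Finite (AdicCompletion (Ideal.span {(p : ℤ)}) ℤ)
      (AdicCompletion (Ideal.span {(p : ℤ)}) A) :=
  bousfield_stmt16_general p A h1
end
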